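/- Let n ≥ 2 be an integer and γ ∈ (0, 1/2]. With 𝔷_1, 𝔷_2, 𝔷_3, 𝔷_4 defined piecewise as: 𝔷_1 = 2+2γ+1/(2γ), 𝔷_2 = (1+γ)²/(2γ), 𝔷_3 = 1/(2γ), 𝔷_4 = 0 for 0 < γ ≤ 1/(n+1), and 𝔷_1 = (1−n)(1+2γ)²/(2(1−2nγ)), 𝔷_2 = (n−2γ)²/(2(1−n)(1−2nγ)), 𝔷_3 = (1−n)/(2(1−2nγ)), 𝔷_4 = 1 + (1−2γ)/(1−2nγ) for 1/(n+1) ≤ γ ≤ 1/2, the (n+2)×(n+2) dual matrix 𝒵 is positive semidefinite. -/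

import Mathlib

/-- The `(n+2) × (n+2)` dual matrix `𝒵` built from `𝔷_1, 𝔷_2, 𝔷_3, 𝔷_4`: its upper-left
`(n+1) × (n+1)` block is
`[[𝔷_1, √(𝔷_1𝔷_2) j_{n-1}ᵀ, -1-𝔷_3+𝔷_4/2],
  [√(𝔷_1𝔷_2) j_{n-1}, 𝔷_2 J_{n-1}, (-1/2-𝔷_3+𝔷_4/2) j_{n-1}],
  [-1-𝔷_3+𝔷_4/2, (-1/2-𝔷_3+𝔷_4/2) j_{n-1}ᵀ, 𝔷_3]]`,
its `(n+2, n+2)` entry is `𝔷_4`, and all remaining entries vanish. -/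
noncomputable def Zmat (n : ℕ) (z1 z2 z3 z4 : ℝ) :
    Matrix (Fin (n + 2)) (Fin (n + 2)) ℝ :=
  Matrix.of fun p q =>
    if p.val = 0 ∧ q.val = 0 then z1
    else if (p.val = 0 ∧ 1 ≤ q.val ∧ q.val ≤ n - 1) ∨
        (1 ≤ p.val ∧ p.val ≤ n - 1 ∧ q.val = 0) then Real.sqrt (z1 * z2)
    else if (p.val = 0 ∧ q.val = n) ∨ (p.val = n ∧ q.val = 0) then -1 - z3 + z4 / 2
    else if 1 ≤ p.val ∧ p.val ≤ n - 1 ∧ 1 ≤ q.val ∧ q.val ≤ n - 1 then z2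
    else if (1 ≤ p.val ∧ p.val ≤ n - 1 ∧ q.val = n) ∨
        (p.val = n ∧ 1 ≤ q.val ∧ q.val ≤ n - 1) then -1 / 2 - z3 + z4 / 2
    else if p.val = n ∧ q.val = n then z3
    else if p.val = n + 1 ∧ q.val = n + 1 then z4
    else 0

/-!
In both regimes `𝒵` has rank at most two: with `w = (√𝔷₁, √𝔷₂ j_{n-1}, -√𝔷₃, 0)` and `e` the last
basis vector, `𝒵 = w wᵀ + 𝔷₄ e eᵀ`. Matching the off-diagonal entries of the first block,
`w wᵀ` reproduces `𝒵` exactly when `√(𝔷₁𝔷₃) = 1 + 𝔷₃ - 𝔷₄/2` and `√(𝔷₂𝔷₃) = 1/2 + 𝔷₃ - 𝔷₄/2`,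
i.e. when the dual variables make the `2 × 2` minors of `𝒵` vanish; the piecewise formulas are
chosen precisely so. What remains is sign bookkeeping.
-/

open Matrix

def zmatVec (n : ℕ) (a b c : ℝ) (p : Fin (n + 2)) : ℝ :=
  if p.val = 0 then a else if p.val ≤ n - 1 then b else if p.val = n then -c else 0

theorem Zmat_sq_eq_vecMulVec_add (n : ℕ) {a b c d : ℝ} (ha : 0 ≤ a) (hb : 0 ≤ b)
    (hac : a * c = 1 + c ^ 2 - d ^ 2 / 2) (hbc : b * c = 1 / 2 + c ^ 2 - d ^ 2 / 2) :
    Zmat n (a ^ 2) (b ^ 2) (c ^ 2) (d ^ 2) =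
      vecMulVec (zmatVec n a b c) (zmatVec n a b c) +
        vecMulVec (Pi.single (Fin.last (n + 1)) d) (Pi.single (Fin.last (n + 1)) d) := by
  have hab : √(a ^ 2 * b ^ 2) = a * b := by
    rw [← mul_pow, Real.sqrt_sq (mul_nonneg ha hb)]
  ext p q
  have := p.isLt
  have := q.isLt
  simp only [Zmat, zmatVec, of_apply, Matrix.add_apply, vecMulVec_apply, Pi.single_apply,
    Fin.ext_iff, Fin.val_last, hab]
  split_ifs <;> first | omega | ring1 | linear_combination hac | linear_combination hbc

theorem Matrix.posSemidef_vecMulVec_self_real {m : Type*} [Fintype m] (v : m → ℝ) :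
    (vecMulVec v v).PosSemidef := by
  simpa using posSemidef_vecMulVec_self_star v

theorem Zmat_posSemidef_of_sq_eq (n : ℕ) {z1 z2 z3 z4 : ℝ}
    (h1 : 0 ≤ z1) (h2 : 0 ≤ z2) (h3 : 0 ≤ z3) (h4 : 0 ≤ z4)
    (h13 : (1 + z3 - z4 / 2) ^ 2 = z1 * z3) (h13' : 0 ≤ 1 + z3 - z4 / 2)
    (h23 : (1 / 2 + z3 - z4 / 2) ^ 2 = z2 * z3) (h23' : 0 ≤ 1 / 2 + z3 - z4 / 2) :
    (Zmat n z1 z2 z3 z4).PosSemidef := by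
  have hac : √z1 * √z3 = 1 + √z3 ^ 2 - √z4 ^ 2 / 2 := by
    rw [← Real.sqrt_mul h1, ← h13, Real.sqrt_sq h13', Real.sq_sqrt h3, Real.sq_sqrt h4]
  have hbc : √z2 * √z3 = 1 / 2 + √z3 ^ 2 - √z4 ^ 2 / 2 := by
    rw [← Real.sqrt_mul h2, ← h23, Real.sqrt_sq h23', Real.sq_sqrt h3, Real.sq_sqrt h4]
  have key := Zmat_sq_eq_vecMulVec_add n (Real.sqrt_nonneg _) (Real.sqrt_nonneg _) hac hbc
  rw [Real.sq_sqrt h1, Real.sq_sqrt h2, Real.sq_sqrt h3, Real.sq_sqrt h4] at key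
  rw [key]
  exact (posSemidef_vecMulVec_self_real _).add (posSemidef_vecMulVec_self_real _)

theorem Zmat_posSemidef_of_pos (n : ℕ) {γ : ℝ} (hγ : 0 < γ) :
    (Zmat n (2 + 2 * γ + 1 / (2 * γ)) ((1 + γ) ^ 2 / (2 * γ)) (1 / (2 * γ)) 0).PosSemidef := by
  have hz3 : 0 < 1 / (2 * γ) := by positivity
  apply Zmat_posSemidef_of_sq_eq n (by positivity) (by positivity) hz3.le le_rfl
  · field_simp
    ring
  · linarith
  · field_simp
    ring
  · linarith

theorem Zmat_posSemidef_of_inv_succ_le {n : ℕ} (hn : 2 ≤ n) {γ : ℝ}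
    (hγ1 : 1 / ((n : ℝ) + 1) ≤ γ) (hγ2 : γ ≤ 1 / 2) :
    (Zmat n ((1 - (n : ℝ)) * (1 + 2 * γ) ^ 2 / (2 * (1 - 2 * (n : ℝ) * γ)))
      (((n : ℝ) - 2 * γ) ^ 2 / (2 * (1 - (n : ℝ)) * (1 - 2 * (n : ℝ) * γ)))
      ((1 - (n : ℝ)) / (2 * (1 - 2 * (n : ℝ) * γ)))
      (1 + (1 - 2 * γ) / (1 - 2 * (n : ℝ) * γ))).PosSemidef := by
  have hN : (2 : ℝ) ≤ n := by exact_mod_cast hn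
  have hγ : 1 ≤ ((n : ℝ) + 1) * γ := by
    rwa [div_le_iff₀' (by positivity)] at hγ1
  set D := 1 - 2 * (n : ℝ) * γ with hD_def
  have hD : D < 0 := by nlinarith
  have hD0 : D ≠ 0 := hD.ne
  have hN1 : 1 - (n : ℝ) ≠ 0 := by linarith
  have hz4 : 1 + (1 - 2 * γ) / D = 2 * (1 - ((n : ℝ) + 1) * γ) / D := by
    field_simp
    rw [hD_def]
    ring
  have h13 : 1 + (1 - (n : ℝ)) / (2 * D) - (1 + (1 - 2 * γ) / D) / 2 =
      (1 - n) * (1 + 2 * γ) / (2 * D) := by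
    field_simp
    rw [hD_def]
    ring
  have h23 : 1 / 2 + (1 - (n : ℝ)) / (2 * D) - (1 + (1 - 2 * γ) / D) / 2 =
      (2 * γ - n) / (2 * D) := by
    field_simp
    ring
  apply Zmat_posSemidef_of_sq_eq n
  · exact div_nonneg_of_nonpos (mul_nonpos_of_nonpos_of_nonneg (by linarith) (sq_nonneg _))
      (by linarith)
  · exact div_nonneg (sq_nonneg _) (by nlinarith)
  · exact div_nonneg_of_nonpos (by linarith) (by linarith)
  · rw [hz4]
    exact div_nonneg_of_nonpos (by linarith) hD.le
  · rw [h13]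
    field_simp
  · rw [h13]
    exact div_nonneg_of_nonpos (by nlinarith) (by linarith)
  · rw [h23]
    field_simp
    ring
  · rw [h23]
    exact div_nonneg_of_nonpos (by linarith) (by linarith)

/-- With the dual variables `𝔷_1, 𝔷_2, 𝔷_3, 𝔷_4` defined piecewise in `γ ∈ (0, 1/2]` as
stated, the `(n+2) × (n+2)` dual matrix `𝒵` is positive semidefinite. -/
theorem Zmat_posSemidef (n : ℕ) (hn : 2 ≤ n) (γ : ℝ)
    (hγ1 : 0 < γ) (hγ2 : γ ≤ 1 / 2) :
    (∀ z1 z2 z3 z4 : ℝ, γ ≤ 1 / ((n : ℝ) + 1) →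
      z1 = 2 + 2 * γ + 1 / (2 * γ) →
      z2 = (1 + γ) ^ 2 / (2 * γ) →
      z3 = 1 / (2 * γ) →
      z4 = 0 →
      (Zmat n z1 z2 z3 z4).PosSemidef) ∧
    (∀ z1 z2 z3 z4 : ℝ, 1 / ((n : ℝ) + 1) ≤ γ →
      z1 = (1 - (n : ℝ)) * (1 + 2 * γ) ^ 2 / (2 * (1 - 2 * (n : ℝ) * γ)) →
      z2 = ((n : ℝ) - 2 * γ) ^ 2 / (2 * (1 - (n : ℝ)) * (1 - 2 * (n : ℝ) * γ)) →
      z3 = (1 - (n : ℝ)) / (2 * (1 - 2 * (n : ℝ) * γ)) →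
      z4 = 1 + (1 - 2 * γ) / (1 - 2 * (n : ℝ) * γ) →
      (Zmat n z1 z2 z3 z4).PosSemidef) := by
  constructor
  · rintro _ _ _ _ - rfl rfl rfl rfl
    exact Zmat_posSemidef_of_pos n hγ1
  · rintro _ _ _ _ hγ rfl rfl rfl rfl
    exact Zmat_posSemidef_of_inv_succ_le hn hγ hγ2
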